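/- Let R be a commutative ring and M = R^n. For every submodule N of M there exists a smallest real submodule of M containing N. -/
import Mathlib


open TensorProduct

/-- The submodule `M ⊗ N + N ⊗ M` of `M ⊗[R] M` (for `M = R^n`), where `N` is
given by a subset `S` of `M`: it is spanned by pure tensors with one factor in `S`. -/
def tensMN {R : Type*} [CommRing R] {n : ℕ} (S : Set (Fin n → R)) :
    Submodule R ((Fin n → R) ⊗[R] (Fin n → R)) :=
  Submodule.span R
    ({x | ∃ a : Fin n → R, ∃ b ∈ S, x = a ⊗ₜ[R] b} ∪
     {x | ∃ b ∈ S, ∃ a : Fin n → R, x = b ⊗ₜ[R] a})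

/-- A submodule `N` of `M = R^n` is *real* if `∑ mᵢ ⊗ mᵢ ∈ M ⊗ N + N ⊗ M` implies
all `mᵢ ∈ N`. -/
def IsRealSubmodule {R : Type*} [CommRing R] {n : ℕ} (N : Submodule R (Fin n → R)) : Prop :=
  ∀ (K : ℕ) (m : Fin K → (Fin n → R)),
    (∑ i, m i ⊗ₜ[R] m i) ∈ tensMN (N : Set (Fin n → R)) → ∀ i, m i ∈ N

/-- The real radical of a submodule of `R^n`: the smallest real submodule containing it. -/
noncomputable def realRadicalSub {R : Type*} [CommRing R] {n : ℕ}
    (N : Submodule R (Fin n → R)) : Submodule R (Fin n → R) :=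
  sInf {P | IsRealSubmodule P ∧ N ≤ P}

/-- The auxiliary radical `α(S)` of a subset of `R^n`. -/
def auxRad {R : Type*} [CommRing R] {n : ℕ} (S : Set (Fin n → R)) : Set (Fin n → R) :=
  {f | ∃ (L : ℕ) (s : Fin L → (Fin n → R)),
    f ⊗ₜ[R] f + ∑ i, s i ⊗ₜ[R] s i ∈ tensMN S}
theorem tensMN_mono {R : Type*} [CommRing R] {n : ℕ} {S T : Set (Fin n → R)}
    (h : S ⊆ T) : tensMN S ≤ tensMN T := by
  apply Submodule.span_mono
  apply Set.union_subset_union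
  · rintro x ⟨a, b, hb, rfl⟩; exact ⟨a, b, h hb, rfl⟩
  · rintro x ⟨b, hb, a, rfl⟩; exact ⟨b, h hb, a, rfl⟩

/-- For every submodule `N` of `R^n` there is a smallest real submodule containing it. -/
theorem stmt4 {R : Type*} [CommRing R] {n : ℕ} (N : Submodule R (Fin n → R)) :
    ∃ P : Submodule R (Fin n → R), IsRealSubmodule P ∧ N ≤ P ∧
      ∀ Q : Submodule R (Fin n → R), IsRealSubmodule Q → N ≤ Q → P ≤ Q := by
  refine ⟨sInf {P | IsRealSubmodule P ∧ N ≤ P}, ?_, ?_, ?_⟩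
  · intro K m hm i
    rw [Submodule.mem_sInf]
    intro Q hQ
    exact hQ.1 K m (tensMN_mono (SetLike.coe_subset_coe.mpr (sInf_le hQ)) hm) i
  · exact le_sInf fun Q hQ => hQ.2
  · intro Q hQ hNQ
    exact sInf_le ⟨hQ, hNQ⟩
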